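/- arXiv:1609.01338 — 3 statements merged into one kernel-verified Lean document; each statement's English description precedes it below -/
import Mathlib

section
/- Let M ∈ ℝ^{2n×2n} be positive definite symmetric with symplectic eigenvalues d₁ ≥ … ≥ dₙ > 0. Then the complex matrix iσM is diagonalisable, all its eigenvalues are real, and counted with multiplicity its eigenvalues are exactly +d₁, …, +dₙ, −d₁, …, −dₙ; equivalently, the characteristic polynomial of iσM is ∏_{j=1}^n (λ² − dⱼ²). -/
open Matrix

/-- The standard symplectic form σ = [[0, Iₙ], [−Iₙ, 0]] on ℝ^{2n},
indexed by `Fin n ⊕ Fin n`. -/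
def symplJ (n : ℕ) : Matrix (Fin n ⊕ Fin n) (Fin n ⊕ Fin n) ℝ :=
  Matrix.fromBlocks 0 1 (-1) 0

/-- `S ∈ Sp(2n)`: a real `2n × 2n` matrix with `Sᵀ σ S = σ`. -/
def IsSymplectic {n : ℕ} (S : Matrix (Fin n ⊕ Fin n) (Fin n ⊕ Fin n) ℝ) : Prop :=
  Sᵀ * symplJ n * S = symplJ n

/-- The block-diagonal matrix `diag(D, D)` built from the diagonal entries `d`. -/
def Dtilde {n : ℕ} (d : Fin n → ℝ) : Matrix (Fin n ⊕ Fin n) (Fin n ⊕ Fin n) ℝ :=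
  Matrix.fromBlocks (Matrix.diagonal d) 0 0 (Matrix.diagonal d)

/-!
Since `S` is symplectic so is `Sᵀ`, i.e. `S σ Sᵀ = σ`; hence `σ M S = S σ (Sᵀ M S) = S σ D̃`, so
`σ M` is similar to `σ D̃ = [[0, D], [−D, 0]]`. Over `ℂ`, the vectors `(eⱼ, −i eⱼ)` and
`(eⱼ, i eⱼ)` are eigenvectors of `i σ D̃` for `dⱼ` and `−dⱼ`, which gives the diagonalisation;
the characteristic polynomial is then that of `diag(D, −D)`.
-/

lemma symplJ_mul_symplJ (n : ℕ) : symplJ n * symplJ n = -1 := by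
  simp [symplJ, fromBlocks_multiply, ← fromBlocks_one, fromBlocks_neg]

lemma symplJ_mul_Dtilde {n : ℕ} (d : Fin n → ℝ) :
    symplJ n * Dtilde d = fromBlocks 0 (diagonal d) (-diagonal d) 0 := by
  simp only [symplJ, Dtilde, fromBlocks_multiply]
  simp

namespace IsSymplectic

variable {n : ℕ} {S : Matrix (Fin n ⊕ Fin n) (Fin n ⊕ Fin n) ℝ}

lemma neg_symplJ_mul_transpose_mul_symplJ_mul_eq_one (hS : IsSymplectic S) :
    -(symplJ n * Sᵀ * symplJ n) * S = 1 := by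
  rw [neg_mul, Matrix.mul_assoc, Matrix.mul_assoc, ← Matrix.mul_assoc Sᵀ, hS,
    symplJ_mul_symplJ, neg_neg]

lemma isUnit (hS : IsSymplectic S) : IsUnit S :=
  .of_mul_eq_one_right _ hS.neg_symplJ_mul_transpose_mul_symplJ_mul_eq_one

lemma transpose (hS : IsSymplectic S) : IsSymplectic Sᵀ := by
  have h : S * symplJ n * Sᵀ * symplJ n = -1 := by
    have h' := mul_eq_one_comm.mp hS.neg_symplJ_mul_transpose_mul_symplJ_mul_eq_one
    rw [Matrix.mul_neg, neg_eq_iff_eq_neg] at h'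
    simpa only [Matrix.mul_assoc] using h'
  calc Sᵀᵀ * symplJ n * Sᵀ = -(S * symplJ n * Sᵀ * (symplJ n * symplJ n)) := by
        rw [symplJ_mul_symplJ, Matrix.mul_neg, Matrix.mul_one, neg_neg, transpose_transpose]
    _ = symplJ n := by rw [← Matrix.mul_assoc, h, neg_one_mul, neg_neg]

lemma symplJ_mul_mul_eq_of_transpose_mul_mul_eq
    {M N : Matrix (Fin n ⊕ Fin n) (Fin n ⊕ Fin n) ℝ} (hS : IsSymplectic S) (hW : Sᵀ * M * S = N) :
    symplJ n * M * S = S * (symplJ n * N) := by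
  have h : S * symplJ n * Sᵀ = symplJ n := by simpa [IsSymplectic] using hS.transpose
  calc symplJ n * M * S = S * symplJ n * Sᵀ * M * S := by rw [h]
    _ = S * (symplJ n * N) := by rw [← hW]; simp only [Matrix.mul_assoc]

end IsSymplectic

section BlockEigenbasis

open Complex

variable {m : Type*} [Fintype m] [DecidableEq m]

variable (m) in
def blockEigenbasis : Matrix (m ⊕ m) (m ⊕ m) ℂ :=
  fromBlocks 1 1 (-I • 1) (I • 1)

lemma blockEigenbasis_mul_fromBlocks :
    blockEigenbasis m * fromBlocks 1 (I • 1) 1 (-I • 1) = (2 : ℂ) • 1 := by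
  rw [blockEigenbasis, fromBlocks_multiply, ← fromBlocks_one, fromBlocks_smul]
  congr 1 <;> simp [smul_smul, two_smul]

lemma isUnit_blockEigenbasis : IsUnit (blockEigenbasis m) :=
  .of_mul_eq_one ((2 : ℂ)⁻¹ • fromBlocks 1 (I • 1) 1 (-I • 1)) <| by
    rw [Matrix.mul_smul, blockEigenbasis_mul_fromBlocks, smul_smul, inv_mul_cancel₀ two_ne_zero,
      one_smul]

lemma smul_I_fromBlocks_mul_blockEigenbasis (D : Matrix m m ℂ) :
    I • fromBlocks 0 D (-D) 0 * blockEigenbasis m =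
      blockEigenbasis m * fromBlocks D 0 0 (-D) := by
  rw [blockEigenbasis, Matrix.smul_mul, fromBlocks_multiply, fromBlocks_multiply, fromBlocks_smul]
  congr 1 <;> simp [smul_smul]

end BlockEigenbasis

lemma map_ofRealHom_symplJ_mul_Dtilde {n : ℕ} (d : Fin n → ℝ) :
    (symplJ n * Dtilde d).map Complex.ofRealHom =
      fromBlocks 0 (diagonal (fun j => (d j : ℂ))) (-diagonal (fun j => (d j : ℂ))) 0 := by
  rw [symplJ_mul_Dtilde, fromBlocks_map]
  simp [diagonal_map]

theorem eigenvalues_of_i_sigma_M_general (n : ℕ)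
    (M S : Matrix (Fin n ⊕ Fin n) (Fin n ⊕ Fin n) ℝ) (d : Fin n → ℝ)
    (hS : IsSymplectic S)
    (hW : Sᵀ * M * S = Dtilde d) :
    (∃ T : Matrix (Fin n ⊕ Fin n) (Fin n ⊕ Fin n) ℂ, IsUnit T ∧
        Complex.I • ((symplJ n * M).map (Complex.ofReal ·)) =
          T * Matrix.diagonal
              (Sum.elim (fun j => (d j : ℂ)) (fun j => -(d j : ℂ))) * T⁻¹) ∧
      (Complex.I • ((symplJ n * M).map (Complex.ofReal ·))).charpoly =
        ∏ j : Fin n, (Polynomial.X ^ 2 - Polynomial.C ((d j : ℂ) ^ 2)) := by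
  -- restate the coercion as a ring hom, so that `Matrix.map_mul` applies
  rw [show (symplJ n * M).map (Complex.ofReal ·) = (symplJ n * M).map Complex.ofRealHom from rfl]
  set A := Complex.I • (symplJ n * M).map Complex.ofRealHom
  set D := diagonal (fun j => (d j : ℂ))
  set Λ := diagonal (Sum.elim (fun j => (d j : ℂ)) (fun j => -(d j : ℂ)))
  set T := S.map Complex.ofRealHom * blockEigenbasis (Fin n)
  have hT : IsUnit T := (hS.isUnit.map Complex.ofRealHom.mapMatrix).mul isUnit_blockEigenbasis
  have hAT : A * T = T * Λ := calc
    A * T = Complex.I • (symplJ n * M * S).map Complex.ofRealHom * blockEigenbasis (Fin n) := by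
      simp only [A, T, Matrix.map_mul, Matrix.smul_mul, Matrix.mul_assoc]
    _ = S.map Complex.ofRealHom *
          (Complex.I • fromBlocks 0 D (-D) 0 * blockEigenbasis (Fin n)) := by
      rw [hS.symplJ_mul_mul_eq_of_transpose_mul_mul_eq hW, Matrix.map_mul,
        map_ofRealHom_symplJ_mul_Dtilde, ← Matrix.mul_smul, Matrix.mul_assoc]
    _ = T * Λ := by
      rw [smul_I_fromBlocks_mul_blockEigenbasis, ← Matrix.mul_assoc]
      simp only [T, Λ, D, diagonal_neg, fromBlocks_diagonal]
  have hA : A = T * Λ * T⁻¹ := by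
    let := hT.invertible
    exact ((mul_inv_eq_iff_eq_mul_of_invertible T _ _).mpr hAT.symm).symm
  refine ⟨⟨T, hT, hA⟩, ?_⟩
  rw [hA, ← hT.unit_spec, charpoly_units_conj, charpoly_diagonal, Fintype.prod_sum_type,
    ← Finset.prod_mul_distrib]
  refine Finset.prod_congr rfl fun j _ => ?_
  simp only [Sum.elim_inl, Sum.elim_inr, map_neg, map_pow]
  ring

/-- If `M` is positive definite with symplectic eigenvalues
`d₁ ≥ … ≥ dₙ > 0` (i.e. `Sᵀ M S = diag(D,D)` for some symplectic `S`), then the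
complex matrix `iσM` is diagonalisable with real eigenvalues
`+d₁, …, +dₙ, −d₁, …, −dₙ` (with multiplicity); equivalently, its characteristic
polynomial is `∏ⱼ (λ² − dⱼ²)`. -/
theorem eigenvalues_of_i_sigma_M (n : ℕ)
    (M S : Matrix (Fin n ⊕ Fin n) (Fin n ⊕ Fin n) ℝ) (d : Fin n → ℝ)
    (hM : M.PosDef) (hS : IsSymplectic S)
    (hd : ∀ i, 0 < d i) (hmono : Antitone d)
    (hW : Sᵀ * M * S = Dtilde d) :
    (∃ T : Matrix (Fin n ⊕ Fin n) (Fin n ⊕ Fin n) ℂ, IsUnit T ∧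
        Complex.I • ((symplJ n * M).map (Complex.ofReal ·)) =
          T * Matrix.diagonal
              (Sum.elim (fun j => (d j : ℂ)) (fun j => -(d j : ℂ))) * T⁻¹) ∧
      (Complex.I • ((symplJ n * M).map (Complex.ofReal ·))).charpoly =
        ∏ j : Fin n, (Polynomial.X ^ 2 - Polynomial.C ((d j : ℂ) ^ 2)) :=
  eigenvalues_of_i_sigma_M_general n M S d hS hW
end

section
/- No uniform constant in the symplectic spectrum stability bound: Let M = diag(x,1) ∈ ℝ^{2×2}, E = [[2,−5],[−5,−2]] and M_ε := M + εE. Then for every ε with 0 < ε < 1/10 and every c > 0 there exists x₀ ≥ 1 such that for all x ≥ x₀: M and M_ε are positive definite and, denoting by D̃ and D̃_ε their Williamson diagonal forms (n = 1), one has ‖D̃ − D̃_ε‖ > c·‖M − M_ε‖ for every unitarily invariant norm ‖·‖. In particular, no inequality of the form ‖D̃ − D̃′‖ ≤ c‖M − M′‖ can hold with a constant c independent of M and M′. -/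
/-!
For `n = 1` a symplectic matrix has determinant `±1`, so the Williamson form `D̃ = diag(d, d)` of a
matrix `M` has `d = √(det M)`. Hence `d = √x` for `M = diag(x, 1)`, while
`d_ε = √(det M_ε) ≤ (1 - ε)√x + 1`: the gap `d - d_ε` grows like `ε√x`. On the other side
`M - M_ε = -εE` is fixed, and since `E / √29` is unitary every unitarily invariant norm gives
`N(M - M_ε) = ε√29 N(1)`, whereas `N(D̃ - D̃_ε) = |d - d_ε| N(1)`.
-/

open Matrix

/-- `N` is a unitarily invariant norm on square complex matrices. -/
def IsUnitarilyInvariantNorm {ι : Type*} [Fintype ι] [DecidableEq ι]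
    (N : Matrix ι ι ℂ → ℝ) : Prop :=
  (∀ A B, N (A + B) ≤ N A + N B) ∧
  (∀ (c : ℂ) (A), N (c • A) = ‖c‖ * N A) ∧
  (∀ A, N A = 0 → A = 0) ∧
  (∀ (A : Matrix ι ι ℂ) (U V : Matrix.unitaryGroup ι ℂ),
    N ((U : Matrix ι ι ℂ) * A * (V : Matrix ι ι ℂ)) = N A)

/-- The matrix `M = diag(x, 1)` (as a `2 × 2` matrix, `n = 1`). -/
def Mmat (x : ℝ) : Matrix (Fin 1 ⊕ Fin 1) (Fin 1 ⊕ Fin 1) ℝ :=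
  Matrix.fromBlocks (Matrix.of fun _ _ => x) 0 0 (Matrix.of fun _ _ => 1)

/-- The perturbation `E = [[2, −5], [−5, −2]]`. -/
def Emat : Matrix (Fin 1 ⊕ Fin 1) (Fin 1 ⊕ Fin 1) ℝ :=
  Matrix.fromBlocks (Matrix.of fun _ _ => 2) (Matrix.of fun _ _ => -5)
    (Matrix.of fun _ _ => -5) (Matrix.of fun _ _ => -2)

section Symplectic

variable {n : ℕ}

theorem symplJ_mul_self : symplJ n * symplJ n = -1 := by
  simp [symplJ, fromBlocks_multiply, ← fromBlocks_one, fromBlocks_neg]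

theorem det_symplJ_ne_zero : (symplJ n).det ≠ 0 := by
  have h := congrArg det (symplJ_mul_self (n := n))
  rw [det_mul, det_neg, det_one] at h
  intro h0
  simp [h0] at h

theorem IsSymplectic.det_sq {S : Matrix (Fin n ⊕ Fin n) (Fin n ⊕ Fin n) ℝ}
    (hS : IsSymplectic S) : S.det ^ 2 = 1 := by
  have h := congrArg det hS
  rw [det_mul, det_mul, det_transpose] at h
  have h' : (symplJ n).det * (S.det ^ 2 - 1) = 0 := by linear_combination h
  simpa [det_symplJ_ne_zero, sub_eq_zero] using h'

theorem det_Dtilde (d : Fin n → ℝ) : (Dtilde d).det = (∏ i, d i) ^ 2 := by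
  rw [Dtilde, det_fromBlocks_zero₂₁, det_diagonal, sq]

theorem det_eq_prod_sq_of_williamson {M S : Matrix (Fin n ⊕ Fin n) (Fin n ⊕ Fin n) ℝ}
    {d : Fin n → ℝ} (hS : IsSymplectic S) (hM : Sᵀ * M * S = Dtilde d) :
    M.det = (∏ i, d i) ^ 2 := by
  have h := congrArg det hM
  rw [det_mul, det_mul, det_transpose, det_Dtilde] at h
  linear_combination h - M.det * hS.det_sq

theorem Dtilde_sub (d d' : Fin n → ℝ) : Dtilde d - Dtilde d' = Dtilde (d - d') := by
  ext (i | i) (j | j) <;> simp [Dtilde, diagonal_apply, apply_ite₂]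

theorem Dtilde_const (t : ℝ) : Dtilde (fun _ : Fin n => t) = t • 1 := by
  rw [Dtilde, ← fromBlocks_one, fromBlocks_smul, smul_zero, smul_one_eq_diagonal]

end Symplectic

theorem symplecticEigenvalue_eq_sqrt_det {M S : Matrix (Fin 1 ⊕ Fin 1) (Fin 1 ⊕ Fin 1) ℝ}
    {d : Fin 1 → ℝ} (hS : IsSymplectic S) (hd : 0 < d 0) (hM : Sᵀ * M * S = Dtilde d) :
    d 0 = √M.det := by
  rw [det_eq_prod_sq_of_williamson hS hM, Fin.prod_univ_one, Real.sqrt_sq hd.le]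

theorem Dtilde_sub_fin_one (d d' : Fin 1 → ℝ) : Dtilde d - Dtilde d' = (d 0 - d' 0) • 1 := by
  rw [Dtilde_sub, ← Dtilde_const]
  congr 1
  ext i
  simp [Subsingleton.elim i 0]

namespace IsUnitarilyInvariantNorm

variable {ι : Type*} [Fintype ι] [DecidableEq ι] {N : Matrix ι ι ℂ → ℝ}

theorem map_zero (hN : IsUnitarilyInvariantNorm N) : N 0 = 0 := by
  simpa using hN.2.1 0 0

theorem nonneg (hN : IsUnitarilyInvariantNorm N) (A : Matrix ι ι ℂ) : 0 ≤ N A := by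
  have h := hN.1 A ((-1 : ℂ) • A)
  rw [hN.2.1, neg_one_smul, add_neg_cancel, hN.map_zero] at h
  simp only [norm_neg, norm_one, one_mul] at h
  linarith

theorem one_pos [Nonempty ι] (hN : IsUnitarilyInvariantNorm N) : 0 < N 1 :=
  (hN.nonneg 1).lt_of_ne fun h => one_ne_zero (hN.2.2.1 1 h.symm)

theorem smul_unitary (hN : IsUnitarilyInvariantNorm N) (c : ℂ)
    {U : Matrix ι ι ℂ} (hU : U ∈ unitaryGroup ι ℂ) : N (c • U) = ‖c‖ * N 1 := by
  rw [hN.2.1, ← hN.2.2.2 1 ⟨U, hU⟩ 1]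
  simp

theorem map_ofReal_smul (hN : IsUnitarilyInvariantNorm N) (r : ℝ) (A : Matrix ι ι ℝ) :
    N ((r • A).map (Complex.ofReal ·)) = |r| * N (A.map (Complex.ofReal ·)) := by
  have h : (r • A).map (Complex.ofReal ·) = (r : ℂ) • A.map (Complex.ofReal ·) := by
    ext i j; simp
  rw [h, hN.2.1, Complex.norm_real, Real.norm_eq_abs]

end IsUnitarilyInvariantNorm

/-- The symmetric matrix `[[a, b], [b, d]]`. -/
def symm2 (a b d : ℝ) : Matrix (Fin 1 ⊕ Fin 1) (Fin 1 ⊕ Fin 1) ℝ :=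
  fromBlocks (of fun _ _ => a) (of fun _ _ => b) (of fun _ _ => b) (of fun _ _ => d)

theorem det_symm2 (a b d : ℝ) : (symm2 a b d).det = a * d - b ^ 2 := by
  rw [← det_submatrix_equiv_self finSumFinEquiv.symm, det_fin_two]
  simp [symm2, sq]
  rfl

theorem posDef_symm2 {a b d : ℝ} (ha : 0 < a) (hdet : b ^ 2 < a * d) :
    (symm2 a b d).PosDef := by
  rw [posDef_iff_dotProduct_mulVec]
  refine ⟨?_, fun v hv => ?_⟩
  · ext (i | i) (j | j) <;> simp [symm2]
  obtain ⟨p, q, hp, hq⟩ : ∃ p q, v (.inl 0) = p ∧ v (.inr 0) = q := ⟨_, _, rfl, rfl⟩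
  have hform : star v ⬝ᵥ symm2 a b d *ᵥ v = a * p ^ 2 + 2 * b * p * q + d * q ^ 2 := by
    simp [dotProduct, mulVec, Fintype.sum_sum_type, symm2, hp, hq]
    ring
  rw [hform]
  rcases eq_or_ne q 0 with rfl | hq0
  · have hp0 : p ≠ 0 := by
      rintro rfl
      exact hv (funext fun i => by rcases i with i | i <;> simp [Subsingleton.elim i 0, hp, hq])
    simp only [mul_zero, add_zero, zero_pow two_ne_zero]
    positivity
  · -- `a` times the form is `(a p + b q)² + (a d - b²) q²`
    nlinarith [sq_nonneg (a * p + b * q), mul_pos (sub_pos.2 hdet) (sq_pos_of_ne_zero hq0)]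

theorem Mmat_eq_symm2 (x : ℝ) : Mmat x = symm2 x 0 1 := by
  ext (i | i) (j | j) <;> simp [Mmat, symm2]

theorem Mmat_add_smul_Emat (x ε : ℝ) :
    Mmat x + ε • Emat = symm2 (x + 2 * ε) (-5 * ε) (1 - 2 * ε) := by
  ext (i | i) (j | j) <;> simp [Mmat, Emat, symm2] <;> ring

-- `E` is symmetric with `E² = 29`, so `E / √29` is unitary.
theorem exists_unitary_Emat_map_ofReal_eq : ∃ U ∈ unitaryGroup (Fin 1 ⊕ Fin 1) ℂ,
    Emat.map (Complex.ofReal ·) = (√29 : ℂ) • U := by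
  have h29 : (√29 : ℂ) ≠ 0 := by simp
  refine ⟨(√29 : ℂ)⁻¹ • Emat.map (Complex.ofReal ·), ?_, (smul_inv_smul₀ h29 _).symm⟩
  rw [mem_unitaryGroup_iff]
  have hsq : ((√29 : ℝ) : ℂ) ^ 2 = 29 := by
    rw [← Complex.ofReal_pow, Real.sq_sqrt (by norm_num)]
    norm_num
  ext (i | i) (j | j) <;>
    simp [Emat, mul_apply, Fintype.sum_sum_type, one_apply, Subsingleton.elim i j]
  all_goals field_simp
  all_goals norm_num [hsq]

theorem sqrt_le_one_sub_mul_add_one {ε t y : ℝ} (hε1 : 2 * ε ≤ 1) (ht : 0 ≤ t)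
    (hy : y ≤ (1 - 2 * ε) * t ^ 2 + 2 * ε) : √y ≤ (1 - ε) * t + 1 := by
  rw [Real.sqrt_le_left (by nlinarith)]
  nlinarith [sq_nonneg (ε * t)]

theorem no_uniform_constant_general (ε : ℝ) (hε0 : 0 < ε) (hε1 : ε < 1 / 10) (c : ℝ) :
    ∃ x₀ : ℝ, 1 ≤ x₀ ∧ ∀ x : ℝ, x₀ ≤ x →
      (Mmat x).PosDef ∧ (Mmat x + ε • Emat).PosDef ∧
      ∀ (d dε : Fin 1 → ℝ) (S Sε : Matrix (Fin 1 ⊕ Fin 1) (Fin 1 ⊕ Fin 1) ℝ),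
        IsSymplectic S → (∀ i, 0 < d i) → Sᵀ * Mmat x * S = Dtilde d →
        IsSymplectic Sε → (∀ i, 0 < dε i) →
        Sεᵀ * (Mmat x + ε • Emat) * Sε = Dtilde dε →
        ∀ N : Matrix (Fin 1 ⊕ Fin 1) (Fin 1 ⊕ Fin 1) ℂ → ℝ,
          IsUnitarilyInvariantNorm N →
          c * N ((Mmat x - (Mmat x + ε • Emat)).map (Complex.ofReal ·)) <
            N ((Dtilde d - Dtilde dε).map (Complex.ofReal ·)) := by
  refine ⟨(c * √29 + 1 / ε) ^ 2 + 1, by nlinarith [sq_nonneg (c * √29 + 1 / ε)], fun x hx => ?_⟩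
  have hx1 : 1 ≤ x := by nlinarith [sq_nonneg (c * √29 + 1 / ε)]
  have hroot : c * √29 + 1 / ε < √x := Real.lt_sqrt_of_sq_lt (by linarith)
  refine ⟨Mmat_eq_symm2 x ▸ posDef_symm2 (by linarith) (by linarith),
    Mmat_add_smul_Emat x ε ▸ posDef_symm2 (by linarith) (by nlinarith), ?_⟩
  intro d dε S Sε hS hd hMS hSε hdε hMSε N hN
  have hd0 : d 0 = √x := by
    rw [symplecticEigenvalue_eq_sqrt_det hS (hd 0) hMS, Mmat_eq_symm2, det_symm2]
    norm_num
  have hdε0 : dε 0 ≤ (1 - ε) * √x + 1 := by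
    rw [symplecticEigenvalue_eq_sqrt_det hSε (hdε 0) hMSε, Mmat_add_smul_Emat, det_symm2]
    refine sqrt_le_one_sub_mul_add_one (by linarith) (Real.sqrt_nonneg x) ?_
    nlinarith [Real.sq_sqrt (by linarith : (0 : ℝ) ≤ x)]
  have hgap : c * ε * √29 < d 0 - dε 0 := by
    have := mul_lt_mul_of_pos_left hroot hε0
    rw [mul_add, mul_one_div_cancel hε0.ne'] at this
    linarith
  obtain ⟨U, hU, hE⟩ := exists_unitary_Emat_map_ofReal_eq
  rw [sub_add_cancel_left, ← neg_smul, hN.map_ofReal_smul, hE, hN.smul_unitary _ hU,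
    Dtilde_sub_fin_one, hN.map_ofReal_smul, Matrix.map_one _ Complex.ofReal_zero Complex.ofReal_one,
    abs_neg, abs_of_pos hε0, Complex.norm_real, Real.norm_of_nonneg (Real.sqrt_nonneg _)]
  nlinarith [hN.one_pos, le_abs_self (d 0 - dε 0)]

/-- **No uniform constant in the symplectic spectrum stability bound.**
For `M = diag(x,1)`, `E = [[2,−5],[−5,−2]]` and `M_ε = M + εE`: for every
`0 < ε < 1/10` and every `c > 0` there is `x₀ ≥ 1` such that for all `x ≥ x₀`,
`M` and `M_ε` are positive definite and their Williamson diagonal forms satisfy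
`N(D̃ − D̃_ε) > c · N(M − M_ε)` for every unitarily invariant norm `N`. -/
theorem no_uniform_constant (ε : ℝ) (hε0 : 0 < ε) (hε1 : ε < 1 / 10)
    (c : ℝ) (hc : 0 < c) :
    ∃ x₀ : ℝ, 1 ≤ x₀ ∧ ∀ x : ℝ, x₀ ≤ x →
      (Mmat x).PosDef ∧ (Mmat x + ε • Emat).PosDef ∧
      ∀ (d dε : Fin 1 → ℝ) (S Sε : Matrix (Fin 1 ⊕ Fin 1) (Fin 1 ⊕ Fin 1) ℝ),
        IsSymplectic S → (∀ i, 0 < d i) → Sᵀ * Mmat x * S = Dtilde d →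
        IsSymplectic Sε → (∀ i, 0 < dε i) →
        Sεᵀ * (Mmat x + ε • Emat) * Sε = Dtilde dε →
        ∀ N : Matrix (Fin 1 ⊕ Fin 1) (Fin 1 ⊕ Fin 1) ℂ → ℝ,
          IsUnitarilyInvariantNorm N →
          c * N ((Mmat x - (Mmat x + ε • Emat)).map (Complex.ofReal ·)) <
            N ((Dtilde d - Dtilde dε).map (Complex.ofReal ·)) :=
  no_uniform_constant_general ε hε0 hε1 c
end

section
/- Uniqueness of the Williamson decomposition up to symplectic-orthogonal matrices: Let M ∈ ℝ^{2n×2n} be positive definite symmetric and let S₁, S₂ ∈ Sp(2n) both satisfy S₁ᵀMS₁ = S₂ᵀMS₂ = D̃, where D̃ is the Williamson diagonal form of M (decreasing order). Then O := S₁⁻¹S₂ is an orthogonal symplectic matrix (O ∈ Sp(2n) ∩ O(2n)) that commutes with D̃; in particular S₁^{−T}S₁^{−1} = S₂^{−T}S₂^{−1}. -/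
/-!
If `S₁` and `S₂` both bring `M` to the Williamson form `D̃`, then `O = S₁⁻¹S₂` is symplectic
and fixes `D̃` under congruence: `OᵀD̃O = D̃`. Together with `OᵀσO = σ` this makes `Oᵀ`
commute with `D̃σ`, hence with `(D̃σ)² = -D̃²`. A positive diagonal matrix is determined by
its square, so `Oᵀ` commutes with `D̃`, and then `OᵀD̃O = D̃` forces `OᵀO = 1`.
-/

open Matrix

theorem Matrix.commute_diagonal_of_commute_sq {ι R : Type*} [Fintype ι] [DecidableEq ι]
    [CommRing R] [LinearOrder R] [IsStrictOrderedRing R] {f : ι → R} (hf : ∀ i, 0 ≤ f i)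
    {X : Matrix ι ι R} (h : Commute X (diagonal f ^ 2)) : Commute X (diagonal f) := by
  ext i j
  have hij : X i j * f j ^ 2 = f i ^ 2 * X i j := by
    simpa [sq, diagonal_mul_diagonal, mul_diagonal, diagonal_mul] using congrFun₂ h.eq i j
  simp only [mul_diagonal, diagonal_mul]
  rcases eq_or_ne (X i j) 0 with h0 | h0
  · simp [h0]
  · have hfji : f j = f i :=
      (sq_eq_sq₀ (hf j) (hf i)).mp (mul_left_cancel₀ h0 (hij.trans (mul_comm _ _)))
    rw [hfji, mul_comm]

theorem Matrix.IsSymm.commute_of_commute_transpose {ι R : Type*} [Fintype ι] [CommSemiring R]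
    {A D : Matrix ι ι R} (hD : D.IsSymm) (h : Commute Aᵀ D) : Commute A D := by
  rw [commute_iff_eq]
  simpa [transpose_mul, hD.eq] using (congrArg Matrix.transpose h.eq).symm

namespace Matrix

variable {ι R : Type*} [Fintype ι] [DecidableEq ι] [CommRing R]

theorem transpose_inv_mul_mul_inv_mul_eq {A B M D : Matrix ι ι R} (hA : IsUnit A.det)
    (hAM : Aᵀ * M * A = D) (hBM : Bᵀ * M * B = D) : (A⁻¹ * B)ᵀ * D * (A⁻¹ * B) = D :=
  calc (A⁻¹ * B)ᵀ * D * (A⁻¹ * B) = Bᵀ * ((A * A⁻¹)ᵀ * M * (A * A⁻¹)) * B := by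
        rw [← hAM, transpose_mul, transpose_mul]; noncomm_ring
    _ = D := by rw [mul_nonsing_inv A hA, transpose_one, Matrix.one_mul, Matrix.mul_one, hBM]

theorem transpose_inv_mul_inv_eq_of_orthogonal {A B : Matrix ι ι R} (hB : IsUnit B.det)
    (h : (A⁻¹ * B)ᵀ * (A⁻¹ * B) = 1) : (A⁻¹)ᵀ * A⁻¹ = (B⁻¹)ᵀ * B⁻¹ :=
  calc (A⁻¹)ᵀ * A⁻¹ = (B * B⁻¹)ᵀ * ((A⁻¹)ᵀ * A⁻¹) * (B * B⁻¹) := by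
        rw [mul_nonsing_inv B hB, transpose_one, Matrix.one_mul, Matrix.mul_one]
    _ = (B⁻¹)ᵀ * ((A⁻¹ * B)ᵀ * (A⁻¹ * B)) * B⁻¹ := by
        simp only [transpose_mul]; noncomm_ring
    _ = (B⁻¹)ᵀ * B⁻¹ := by rw [h, Matrix.mul_one]

theorem transpose_mul_self_eq_one_of_commute {O D : Matrix ι ι R} (hD : IsUnit D)
    (hc : Commute Oᵀ D) (h : Oᵀ * D * O = D) : Oᵀ * O = 1 :=
  hD.mul_left_cancel <| by rw [← Matrix.mul_assoc, ← hc.eq, h, Matrix.mul_one]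

end Matrix

namespace SymplecticGroup

variable {l R : Type*} [DecidableEq l] [Fintype l] [CommRing R]

theorem inv_mul_mem {A B : Matrix (l ⊕ l) (l ⊕ l) R} (hA : A ∈ symplecticGroup l R)
    (hB : B ∈ symplecticGroup l R) : A⁻¹ * B ∈ symplecticGroup l R := by
  rw [← coe_inv' ⟨A, hA⟩]
  exact mul_mem (⟨A, hA⟩⁻¹ : symplecticGroup l R).2 hB

theorem commute_transpose_mul_J {O D : Matrix (l ⊕ l) (l ⊕ l) R}
    (hO : O ∈ symplecticGroup l R) (hD : Oᵀ * D * O = D) : Commute Oᵀ (D * J l R) := by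
  have hinv : O * O⁻¹ = 1 := mul_nonsing_inv O (symplectic_det hO)
  have hOD : Oᵀ * D = D * O⁻¹ :=
    calc Oᵀ * D = Oᵀ * D * (O * O⁻¹) := by rw [hinv, Matrix.mul_one]
      _ = D * O⁻¹ := by rw [← Matrix.mul_assoc, hD]
  rw [inv_eq_symplectic_inv O hO] at hOD
  calc Oᵀ * (D * J l R) = D * -(J l R * Oᵀ * (J l R * J l R)) := by
        rw [← Matrix.mul_assoc, hOD]; noncomm_ring
    _ = D * J l R * Oᵀ := by rw [J_squared]; noncomm_ring

end SymplecticGroup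

theorem symplJ_eq_neg_J (n : ℕ) : symplJ n = -J (Fin n) ℝ := by
  simp [symplJ, J, fromBlocks_neg]

theorem isSymplectic_iff_mem_symplecticGroup {n : ℕ}
    {S : Matrix (Fin n ⊕ Fin n) (Fin n ⊕ Fin n) ℝ} :
    IsSymplectic S ↔ S ∈ symplecticGroup (Fin n) ℝ := by
  rw [SymplecticGroup.mem_iff', IsSymplectic, symplJ_eq_neg_J, Matrix.mul_neg, Matrix.neg_mul,
    neg_inj]

theorem Dtilde_eq_diagonal {n : ℕ} (d : Fin n → ℝ) : Dtilde d = diagonal (Sum.elim d d) := by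
  rw [Dtilde, fromBlocks_diagonal]

theorem isSymm_Dtilde {n : ℕ} (d : Fin n → ℝ) : (Dtilde d).IsSymm := by
  rw [Dtilde_eq_diagonal]
  exact isSymm_diagonal _

theorem isUnit_Dtilde {n : ℕ} {d : Fin n → ℝ} (hd : ∀ i, d i ≠ 0) : IsUnit (Dtilde d) := by
  rw [Dtilde_eq_diagonal, isUnit_diagonal, Pi.isUnit_iff]
  rintro (i | i) <;> exact (hd i).isUnit

theorem commute_Dtilde_J {n : ℕ} (d : Fin n → ℝ) : Commute (Dtilde d) (J (Fin n) ℝ) := by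
  rw [commute_iff_eq, Dtilde, J, fromBlocks_multiply, fromBlocks_multiply]
  simp

theorem commute_transpose_Dtilde_of_mem_symplecticGroup {n : ℕ} {d : Fin n → ℝ}
    {O : Matrix (Fin n ⊕ Fin n) (Fin n ⊕ Fin n) ℝ} (hd : ∀ i, 0 ≤ d i)
    (hO : O ∈ symplecticGroup (Fin n) ℝ) (h : Oᵀ * Dtilde d * O = Dtilde d) :
    Commute Oᵀ (Dtilde d) := by
  have hsq : (Dtilde d * J (Fin n) ℝ) ^ 2 = -Dtilde d ^ 2 := by
    rw [(commute_Dtilde_J d).mul_pow, sq (J _ _), J_squared, mul_neg_one]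
  have hcomm_sq : Commute Oᵀ (Dtilde d ^ 2) := by
    simpa [hsq] using (SymplecticGroup.commute_transpose_mul_J hO h).pow_right 2
  rw [Dtilde_eq_diagonal] at hcomm_sq ⊢
  exact commute_diagonal_of_commute_sq (by rintro (i | i) <;> exact hd i) hcomm_sq

theorem williamson_uniqueness_general (n : ℕ)
    (M S₁ S₂ : Matrix (Fin n ⊕ Fin n) (Fin n ⊕ Fin n) ℝ) (d : Fin n → ℝ)
    (hS₁ : IsSymplectic S₁) (hS₂ : IsSymplectic S₂)
    (hd : ∀ i, 0 < d i)
    (hW₁ : S₁ᵀ * M * S₁ = Dtilde d) (hW₂ : S₂ᵀ * M * S₂ = Dtilde d) :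
    IsSymplectic (S₁⁻¹ * S₂) ∧ (S₁⁻¹ * S₂)ᵀ * (S₁⁻¹ * S₂) = 1 ∧
      (S₁⁻¹ * S₂) * Dtilde d = Dtilde d * (S₁⁻¹ * S₂) ∧
      (S₁⁻¹)ᵀ * S₁⁻¹ = (S₂⁻¹)ᵀ * S₂⁻¹ := by
  rw [isSymplectic_iff_mem_symplecticGroup] at hS₁ hS₂ ⊢
  have hO := SymplecticGroup.inv_mul_mem hS₁ hS₂
  have hOD := transpose_inv_mul_mul_inv_mul_eq (SymplecticGroup.symplectic_det hS₁) hW₁ hW₂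
  have hcomm := commute_transpose_Dtilde_of_mem_symplecticGroup (fun i ↦ (hd i).le) hO hOD
  have horth := transpose_mul_self_eq_one_of_commute (isUnit_Dtilde fun i ↦ (hd i).ne') hcomm hOD
  exact ⟨hO, horth, ((isSymm_Dtilde d).commute_of_commute_transpose hcomm).eq,
    transpose_inv_mul_inv_eq_of_orthogonal (SymplecticGroup.symplectic_det hS₂) horth⟩

/-- **Uniqueness of the Williamson decomposition up to orthogonal symplectic
matrices.**  If `S₁, S₂ ∈ Sp(2n)` both bring the positive definite `M` to its
Williamson diagonal form `D̃` (decreasing order), then `O := S₁⁻¹S₂` is symplectic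
and orthogonal and commutes with `D̃`; in particular `S₁⁻ᵀS₁⁻¹ = S₂⁻ᵀS₂⁻¹`. -/
theorem williamson_uniqueness (n : ℕ)
    (M S₁ S₂ : Matrix (Fin n ⊕ Fin n) (Fin n ⊕ Fin n) ℝ) (d : Fin n → ℝ)
    (hM : M.PosDef)
    (hS₁ : IsSymplectic S₁) (hS₂ : IsSymplectic S₂)
    (hd : ∀ i, 0 < d i) (hmono : Antitone d)
    (hW₁ : S₁ᵀ * M * S₁ = Dtilde d) (hW₂ : S₂ᵀ * M * S₂ = Dtilde d) :
    IsSymplectic (S₁⁻¹ * S₂) ∧ (S₁⁻¹ * S₂)ᵀ * (S₁⁻¹ * S₂) = 1 ∧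
      (S₁⁻¹ * S₂) * Dtilde d = Dtilde d * (S₁⁻¹ * S₂) ∧
      (S₁⁻¹)ᵀ * S₁⁻¹ = (S₂⁻¹)ᵀ * S₂⁻¹ :=
  williamson_uniqueness_general n M S₁ S₂ d hS₁ hS₂ hd hW₁ hW₂
end
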